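/- arXiv:2008.04539 — 2 statements merged into one kernel-verified Lean document; each statement's English description precedes it below -/
import Mathlib

section
/- Every 1-generic Turing degree strictly below 0′ is thin: if A is 1-generic and A <_T 0′, then there is a recursive tree T (over an alphabet coding {0,1,B} into binary) such that [T] is a thin Π⁰₁ class containing a path C with C ≡_T A. -/
/-- Finite binary strings. -/
abbrev BStr := List Bool

/-- The length-`k` initial segment of an infinite sequence, as a finite string. -/
def seg {α : Type} (A : ℕ → α) (k : ℕ) : List α := (List.range k).map A

/-- A Σ⁰₁ (r.e.) set of binary strings. -/
def Sigma01 (V : Set BStr) : Prop :=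
  ∃ f : BStr → ℕ → Bool, Computable₂ f ∧ ∀ σ, σ ∈ V ↔ ∃ n, f σ n = true

/-- A Σ⁰₂ set of binary strings. -/
def Sigma02 (V : Set BStr) : Prop :=
  ∃ f : BStr → ℕ × ℕ → Bool, Computable₂ f ∧ ∀ σ, σ ∈ V ↔ ∃ m, ∀ n, f σ (m, n) = true

/-- `A` meets the set of strings `V`. -/
def Meets (A : ℕ → Bool) (V : Set BStr) : Prop := ∃ k, seg A k ∈ V

/-- `A` avoids the set of strings `V`. -/
def Avoids (A : ℕ → Bool) (V : Set BStr) : Prop := ∃ k, ∀ τ, seg A k <+: τ → τ ∉ V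

/-- `A` is 1-generic. -/
def OneGeneric (A : ℕ → Bool) : Prop := ∀ V, Sigma01 V → Meets A V ∨ Avoids A V

/-- `A` is 2-generic. -/
def TwoGeneric (A : ℕ → Bool) : Prop := ∀ V, Sigma02 V → Meets A V ∨ Avoids A V

/-- A Turing functional: a computable, oracle-use-monotone map from finite oracle
strings to partial values. -/
structure Functional (α β : Type) [Primcodable α] [Primcodable β] where
  φ : List α → ℕ → Option β
  comp : Computable₂ φ
  mono : ∀ {σ τ : List α} {x : ℕ} {b : β}, σ <+: τ → φ σ x = some b → φ τ x = some b

/-- `Φ^A = B` (in particular `Φ^A` is total). -/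
def FunApplies {α β : Type} [Primcodable α] [Primcodable β]
    (Φ : Functional α β) (A : ℕ → α) (B : ℕ → β) : Prop :=
  ∀ x, ∃ k, Φ.φ (seg A k) x = some (B x)

/-- Turing reducibility `B ≤_T A`. -/
def TuringLE {α β : Type} [Primcodable α] [Primcodable β] (B : ℕ → β) (A : ℕ → α) : Prop :=
  ∃ Φ : Functional α β, FunApplies Φ A B

/-- Turing equivalence `B ≡_T A`. -/
def TuringEquiv {α β : Type} [Primcodable α] [Primcodable β] (B : ℕ → β) (A : ℕ → α) : Prop :=
  TuringLE B A ∧ TuringLE A B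

/-- A tree: a set of strings closed under initial segments. -/
def IsTree {α : Type} (T : Set (List α)) : Prop := ∀ σ τ : List α, σ <+: τ → τ ∈ T → σ ∈ T

/-- A recursive tree. -/
def RecTree {α : Type} [Primcodable α] (T : Set (List α)) : Prop :=
  IsTree T ∧ ∃ f : List α → Bool, Computable f ∧ ∀ σ, σ ∈ T ↔ f σ = true

/-- Every string on the tree has a proper extension on the tree. -/
def ExtendibleTree {α : Type} (T : Set (List α)) : Prop :=
  ∀ σ ∈ T, ∃ τ ∈ T, σ <+: τ ∧ σ ≠ τ

/-- The set `[T]` of infinite paths through the tree `T`. -/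
def paths {α : Type} (T : Set (List α)) : Set (ℕ → α) := {X | ∀ k, seg X k ∈ T}

/-- A clopen subset of the path space: a finite union of basic cylinders. -/
def ClopenC {α : Type} (N : Set (ℕ → α)) : Prop :=
  ∃ F : Finset (List α), N = {X | ∃ σ ∈ F, seg X σ.length = σ}

/-- A Π⁰₁ class: the set of paths through a recursive tree. -/
def Pi01C {α : Type} [Primcodable α] (P : Set (ℕ → α)) : Prop := ∃ T, RecTree T ∧ P = paths T

/-- A thin Π⁰₁ class: every Π⁰₁ subclass is the intersection with a clopen set. -/
def ThinPi01 {α : Type} [Primcodable α] (P : Set (ℕ → α)) : Prop :=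
  Pi01C P ∧ ∀ Q, Pi01C Q → Q ⊆ P → ∃ N, ClopenC N ∧ Q = P ∩ N

/-- `A` is of thin-free degree: no set Turing equivalent to `A` belongs to a thin Π⁰₁ class. -/
def ThinFreeDegree (A : ℕ → Bool) : Prop :=
  ∀ B : ℕ → Bool, TuringEquiv B A → ∀ P : Set (ℕ → Bool), ThinPi01 P → B ∉ P

open Classical in
/-- The halting problem `0′`. -/
noncomputable def K : ℕ → Bool := fun n =>
  if (Nat.Partrec.Code.eval (Denumerable.ofNat Nat.Partrec.Code n) n).Dom then true else false

/-- A recursive (limit-lemma) approximation of `A`. -/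
def RecApprox (σs : ℕ → BStr) (A : ℕ → Bool) : Prop :=
  Computable σs ∧ ∀ n, ∃ s0, ∀ s ≥ s0, (σs s).take n = seg A n

/-- `τ` is an initial segment of `A`. -/
def InitSegOf {α : Type} (τ : List α) (A : ℕ → α) : Prop := τ = seg A τ.length

/-- A recursively enumerable set of natural numbers. -/
def REset (S : Set ℕ) : Prop :=
  ∃ f : ℕ → ℕ → Bool, Computable₂ f ∧ ∀ s, s ∈ S ↔ ∃ n, f s n = true

/-- A Σ₁-correct approximation: every infinite r.e. set of stages contains a stage
whose approximating string is a true initial segment of `A`. -/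
def SigmaOneCorrect (σs : ℕ → BStr) (A : ℕ → Bool) : Prop :=
  ∀ S : Set ℕ, REset S → S.Infinite → ∃ s ∈ S, InitSegOf (σs s) A

/-- The three-letter alphabet `{0,1,B}`: `none` is the blank symbol `B`. -/
abbrev Sym3 := Option Bool

/-- Delete all blanks `B` from a string over `{0,1,B}`. -/
def delB (τ : List Sym3) : BStr := τ.filterMap id

/-- The level-marker function `l(s)` of the construction:
`l(0)=0`, `l(1)=|σ_0|+1`, `l(s+2)=l(s+1)+|σ_{s+1}|-|σ_s|`. -/
def lvl (σs : ℕ → BStr) : ℕ → ℕ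
  | 0 => 0
  | 1 => (σs 0).length + 1
  | (s+2) => lvl σs (s+1) + ((σs (s+1)).length - (σs s).length)

/-- The stage during which level `n` of the tree is constructed:
the `s` with `l(s) ≤ n < l(s+1)`. -/
def stg (σs : ℕ → BStr) (n : ℕ) : ℕ :=
  ((List.range (n + 2)).filter (fun s => lvl σs (s + 1) ≤ n)).length

/-- The tree `T ⊆ {0,1,B}^{<ω}` constructed from the approximation `(σ_s)`:
a string `τ` at a level built during stage `s` whose `B`-deleted part is an
initial segment of `σ_s` gets both children `0` and `1`; all other strings are
extended only by the blank `B`. -/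
inductive TreeT (σs : ℕ → BStr) : List Sym3 → Prop
  | nil : TreeT σs []
  | ext (τ : List Sym3) (a : Sym3) : TreeT σs τ →
      (if delB τ <+: σs (stg σs τ.length) then a ≠ none else a = none) →
      TreeT σs (τ ++ [a])

/-!
By the limit lemma `A` has a recursive approximation `σ s → A`. In the tree over `{0,1,B}` in
which a string may branch at level `s` exactly when its bits (blanks deleted) form a prefix of
`σ s`, the strings whose bits are initial segments of `A` form a single path, which branches
infinitely often, codes `A` and is computable from `A`. Every other string of the tree eventually
stops branching, so every other path is isolated by a segment of a length that only depends on
where it leaves the true path. For a `Π⁰₁` subclass `[T']`, `1`-genericity applied to the bits of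
the strings of the tree outside `T'` shows that `[T']` either misses or contains a cylinder around
the true path; outside that cylinder it consists of finitely many isolated paths, hence it is
clopen in the class.
-/

open Filter

section Strings

variable {α : Type}

@[simp] theorem seg_length (A : ℕ → α) (k : ℕ) : (seg A k).length = k := by
  simp [seg]

theorem seg_succ (A : ℕ → α) (k : ℕ) : seg A (k + 1) = seg A k ++ [A k] := by
  simp [seg, List.range_succ]

theorem getElem?_seg (A : ℕ → α) {x k : ℕ} (h : x < k) : (seg A k)[x]? = some (A x) := by
  simp [seg, h]

theorem seg_take (A : ℕ → α) {m n : ℕ} (h : m ≤ n) : (seg A n).take m = seg A m := by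
  simp [seg, ← List.map_take, List.take_range, h]

theorem seg_prefix_seg (A : ℕ → α) {m n : ℕ} (h : m ≤ n) : seg A m <+: seg A n := by
  rw [List.prefix_iff_eq_take, seg_length, seg_take A h]

theorem seg_congr {A B : ℕ → α} {k : ℕ} (h : ∀ i < k, A i = B i) : seg A k = seg B k :=
  List.map_congr_left fun i hi => h i (List.mem_range.mp hi)

theorem eq_of_seg_eq {A B : ℕ → α} {k : ℕ} (h : seg A k = seg B k) {i : ℕ} (hi : i < k) :
    A i = B i :=
  Option.some_injective _ (by rw [← getElem?_seg A hi, h, getElem?_seg B hi])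

theorem initSegOf_seg (A : ℕ → α) (k : ℕ) : InitSegOf (seg A k) A := by
  simp [InitSegOf]

theorem initSegOf_of_prefix_seg {τ : List α} {A : ℕ → α} {n : ℕ} (h : τ <+: seg A n) :
    InitSegOf τ A := by
  have hn : τ.length ≤ n := by simpa using h.length_le
  rw [InitSegOf, List.prefix_iff_eq_take.mp h, seg_take A hn, seg_length]

theorem InitSegOf.of_prefix {τ ρ : List α} {A : ℕ → α} (h : τ <+: ρ) (hρ : InitSegOf ρ A) :
    InitSegOf τ A :=
  initSegOf_of_prefix_seg (hρ ▸ h)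

theorem initSegOf_append_singleton_iff {τ : List α} {b : α} {A : ℕ → α} :
    InitSegOf (τ ++ [b]) A ↔ InitSegOf τ A ∧ b = A τ.length := by
  simp only [InitSegOf, List.length_append, List.length_singleton, seg_succ]
  constructor
  · intro h
    obtain ⟨h₁, h₂⟩ := List.append_inj h (by simp)
    exact ⟨h₁, List.singleton_inj.mp h₂⟩
  · rintro ⟨h₁, rfl⟩
    exact congrArg (· ++ [A τ.length]) h₁

end Strings

@[simp] theorem delB_append (τ ρ : List Sym3) : delB (τ ++ ρ) = delB τ ++ delB ρ :=
  List.filterMap_append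

@[simp] theorem delB_singleton_none : delB [none] = [] := rfl

@[simp] theorem delB_singleton_some (b : Bool) : delB [some b] = [b] := rfl

theorem delB_length_le (τ : List Sym3) : (delB τ).length ≤ τ.length :=
  List.length_filterMap_le id τ

theorem List.IsPrefix.delB {τ ρ : List Sym3} (h : τ <+: ρ) : delB τ <+: delB ρ := by
  obtain ⟨t, rfl⟩ := h
  exact ⟨_, (delB_append τ t).symm⟩

theorem primrec_delB : Primrec delB :=
  Primrec.listFilterMap Primrec.id Primrec.snd

theorem primrecRel_isPrefix {α : Type} [Primcodable α] [DecidableEq α] :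
    PrimrecRel (fun l₁ l₂ : List α => l₁ <+: l₂) :=
  (Primrec.eq.comp (Primrec.list_take.comp (Primrec.list_length.comp Primrec.fst) Primrec.snd)
    Primrec.fst).of_eq fun _ => eq_comm.trans List.prefix_iff_eq_take.symm

theorem Computable₂.map_range {α β : Type} [Primcodable α] [Primcodable β] {f : α → ℕ → β}
    (hf : Computable₂ f) : Computable₂ fun a n => (List.range n).map (f a) := by
  have h : Computable fun p : α × ℕ =>
      (Nat.rec [] (fun y l => l ++ [f p.1 y]) p.2 : List β) :=
    Computable.nat_rec Computable.snd (Computable.const [])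
      (Computable.list_concat.comp (Computable.snd.comp Computable.snd)
        (hf.comp (Computable.fst.comp Computable.fst) (Computable.fst.comp Computable.snd))).to₂
  refine h.of_eq fun ⟨a, n⟩ => ?_
  induction n with
  | zero => rfl
  | succ n ih => simp only at ih ⊢; rw [ih, List.range_succ, List.map_append]; rfl

theorem Filter.eventually_forall_lt {β : Type*} {l : Filter β} {p : ℕ → β → Prop}
    (h : ∀ i, ∀ᶠ s in l, p i s) (n : ℕ) : ∀ᶠ s in l, ∀ i < n, p i s :=
  (eventually_all_finite (Set.finite_lt_nat n)).2 fun i _ => h i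

section Clopen

variable {α : Type}

theorem ClopenC.union {N₁ N₂ : Set (ℕ → α)} (h₁ : ClopenC N₁) (h₂ : ClopenC N₂) :
    ClopenC (N₁ ∪ N₂) := by
  classical
  obtain ⟨F₁, rfl⟩ := h₁
  obtain ⟨F₂, rfl⟩ := h₂
  exact ⟨F₁ ∪ F₂, by ext X; simp [or_and_right, exists_or]⟩

theorem clopenC_cylinder (τ : List α) : ClopenC {X : ℕ → α | seg X τ.length = τ} :=
  ⟨{τ}, by simp⟩

theorem exists_clopenC_of_isolated [Finite α] {P S : Set (ℕ → α)} (hSP : S ⊆ P) {L : ℕ}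
    (hiso : ∀ X ∈ S, ∀ Y ∈ P, seg Y L = seg X L → Y = X) : ∃ N, ClopenC N ∧ S = P ∩ N := by
  classical
  have hfin : ((seg · L) '' S).Finite :=
    (List.finite_length_eq α L).subset (by rintro _ ⟨X, -, rfl⟩; simp)
  refine ⟨_, ⟨hfin.toFinset, rfl⟩, Set.ext fun Y => ⟨fun hY => ⟨hSP hY, seg Y L, ?_, by simp⟩, ?_⟩⟩
  · exact hfin.mem_toFinset.mpr ⟨Y, hY, rfl⟩
  · rintro ⟨hY, _, hX, hYX⟩
    obtain ⟨X, hXS, rfl⟩ := hfin.mem_toFinset.mp hX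
    rw [seg_length] at hYX
    exact hiso X hXS Y hY hYX ▸ hXS

end Clopen

theorem sigma01_image {α : Type} [Primcodable α] {p : α → Bool} {g : α → BStr}
    (hp : Computable p) (hg : Computable g) : Sigma01 {δ | ∃ a, p a = true ∧ g a = δ} := by
  refine ⟨fun δ m => ((Encodable.decode m : Option α).map fun a => p a && decide (g a = δ)).getD
    false, ?_, fun δ => ⟨?_, ?_⟩⟩
  · exact Computable.option_getD (Computable.option_map (Computable.decode.comp Computable.snd)
      ((Primrec.and.to_comp.comp (hp.comp Computable.snd)
        (Primrec.eq.decide.to_comp.comp (hg.comp Computable.snd)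
          (Computable.fst.comp Computable.fst))).to₂)) (Computable.const false)
  · rintro ⟨a, hpa, rfl⟩
    exact ⟨Encodable.encode a, by simp [hpa]⟩
  · rintro ⟨m, hm⟩
    cases ha : (Encodable.decode m : Option α) with
    | none => simp [ha] at hm
    | some a => exact ⟨a, by simpa [ha] using hm⟩

section LimitLemma

open Nat.Partrec

def haltApprox (s n : ℕ) : Bool := (Code.evaln s (Denumerable.ofNat Code n) n).isSome

theorem primrec₂_haltApprox : Primrec₂ haltApprox :=
  Primrec.option_isSome.comp <| Code.primrec_evaln.comp
    ((Primrec.fst.pair ((Primrec.ofNat Code).comp Primrec.snd)).pair Primrec.snd)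

theorem eventually_haltApprox_eq (n : ℕ) : ∀ᶠ s in atTop, haltApprox s n = K n := by
  classical
  by_cases hd : (Code.eval (Denumerable.ofNat Code n) n).Dom
  · obtain ⟨k, hk⟩ := Code.evaln_complete.mp (Part.get_mem hd)
    filter_upwards [eventually_ge_atTop k] with s hs
    simp [haltApprox, K, hd, Option.mem_def.mp (Code.evaln_mono hs hk)]
  · refine Eventually.of_forall fun s => ?_
    simp only [haltApprox, K, hd, if_false, Option.isSome_eq_false_iff, Option.isNone_iff_eq_none]
    by_contra hne
    obtain ⟨x, hx⟩ := Option.ne_none_iff_exists'.mp hne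
    exact hd (Part.dom_iff_mem.mpr ⟨x, Code.evaln_sound hx⟩)

theorem exists_recApprox_of_turingLE {A B : ℕ → Bool} {g : ℕ → ℕ → Bool} (hg : Computable₂ g)
    (hgB : ∀ n, ∀ᶠ s in atTop, g s n = B n) (h : TuringLE A B) : ∃ σ, RecApprox σ A := by
  obtain ⟨Φ, hΦ⟩ := h
  let f s n := (Φ.φ (seg (g s) s) n).getD false
  have hf : Computable₂ f :=
    Computable.option_getD (Φ.comp.comp
      (((Computable₂.map_range hg).comp Computable.id Computable.id).comp Computable.fst)
      Computable.snd) (Computable.const false)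
  have hconv (x : ℕ) : ∀ᶠ s in atTop, f s x = A x := by
    obtain ⟨k, hk⟩ := hΦ x
    filter_upwards [eventually_ge_atTop k, eventually_forall_lt hgB k] with s hks hgs
    have hpre : seg B k <+: seg (g s) s :=
      seg_congr (fun i hi => (hgs i hi).symm) ▸ seg_prefix_seg (g s) hks
    simp [f, Φ.mono hpre hk]
  refine ⟨fun s => (List.range s).map (f s),
    (Computable₂.map_range hf).comp Computable.id Computable.id, fun n => eventually_atTop.mp ?_⟩
  filter_upwards [eventually_ge_atTop n, eventually_forall_lt hconv n] with s hns hfs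
  rw [← List.map_take, List.take_range, min_eq_left hns]
  exact seg_congr hfs

theorem exists_recApprox_of_turingLE_K {A : ℕ → Bool} (h : TuringLE A K) : ∃ σ, RecApprox σ A :=
  exists_recApprox_of_turingLE primrec₂_haltApprox.to_comp eventually_haltApprox_eq h

theorem RecApprox.eventually_take_eq {σ : ℕ → BStr} {A : ℕ → Bool} (hσ : RecApprox σ A) (n : ℕ) :
    ∀ᶠ s in atTop, (σ s).take n = seg A n :=
  eventually_atTop.mpr (hσ.2 n)

end LimitLemma

section Tree

variable (σ : ℕ → BStr)

/-- When `(σ s).length = s` for all `s`, each stage of the construction of `TreeT σ` builds one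
level, and this is `TreeT σ`. -/
def approxTree : Set (List Sym3) :=
  {τ | ∀ i < τ.length, (τ.getD i none).isSome ↔ delB (τ.take i) <+: σ i}

variable {σ}

theorem nil_mem_approxTree : [] ∈ approxTree σ := fun _ hi => absurd hi (Nat.not_lt_zero _)

theorem isTree_approxTree : IsTree (approxTree σ) := by
  rintro τ _ ⟨t, rfl⟩ h i hi
  simpa [List.getD_eq_getElem?_getD, List.getElem?_append_left hi,
    List.take_append_of_le_length hi.le] using h i (by simp; omega)

theorem append_singleton_mem_approxTree_iff {τ : List Sym3} {a : Sym3} :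
    τ ++ [a] ∈ approxTree σ ↔ τ ∈ approxTree σ ∧ (a.isSome ↔ delB τ <+: σ τ.length) := by
  constructor
  · intro h
    refine ⟨isTree_approxTree _ _ (List.prefix_append τ [a]) h, ?_⟩
    simpa using h τ.length (by simp)
  · rintro ⟨hτ, ha⟩ i hi
    rcases (show i < τ.length ∨ i = τ.length by simp at hi; omega) with hi | rfl
    · simpa [List.getD_eq_getElem?_getD, List.getElem?_append_left hi,
        List.take_append_of_le_length hi.le] using hτ i hi
    · simpa using ha

theorem isSome_iff_of_mem_paths {X : ℕ → Sym3} (hX : X ∈ paths (approxTree σ)) (n : ℕ) :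
    (X n).isSome ↔ delB (seg X n) <+: σ n := by
  have h := hX (n + 1)
  rw [seg_succ, append_singleton_mem_approxTree_iff, seg_length] at h
  exact h.2

theorem computablePred_mem_approxTree (hσ : Computable σ) : ComputablePred (· ∈ approxTree σ) := by
  classical
  let R : List Sym3 × List BStr → Prop := fun p => ∀ i ∈ List.range p.1.length,
    (p.1.getD i none).isSome = decide (delB (p.1.take i) <+: p.2.getD i [])
  have hR : PrimrecPred R := by
    open Primrec in
    have hlevel : PrimrecRel fun (i : ℕ) (p : List Sym3 × List BStr) =>
        (p.1.getD i none).isSome = decide (delB (p.1.take i) <+: p.2.getD i []) :=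
      Primrec.eq.comp (option_isSome.comp ((list_getD none).comp (fst.comp snd) fst))
        (primrecRel_isPrefix.decide.comp (primrec_delB.comp (list_take.comp fst (fst.comp snd)))
          ((list_getD []).comp (snd.comp snd) fst))
    exact hlevel.forall_mem_list.comp (list_range.comp (list_length.comp fst)) Primrec.id
  have hmem (τ : List Sym3) : τ ∈ approxTree σ ↔ R (τ, (List.range τ.length).map σ) := by
    simp only [R, List.mem_range]
    refine forall₂_congr fun i hi => ?_
    cases (τ.getD i none).isSome <;> simp [List.getD_eq_getElem?_getD, hi]
  obtain ⟨_, hR⟩ := hR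
  have hσs : Computable fun τ : List Sym3 => (List.range τ.length).map σ :=
    (Computable₂.map_range (hσ.comp Computable.snd).to₂).comp Computable.id Computable.list_length
  exact ComputablePred.of_eq ⟨inferInstance, hR.to_comp.comp (Computable.id.pair hσs)⟩
    fun τ => (hmem τ).symm

theorem recTree_approxTree (hσ : Computable σ) : RecTree (approxTree σ) := by
  obtain ⟨f, hf, hfT⟩ := ComputablePred.computable_iff.mp (computablePred_mem_approxTree hσ)
  exact ⟨isTree_approxTree, f, hf, fun τ => Iff.of_eq (congrFun hfT τ)⟩

end Tree

section TruePath

variable (σ : ℕ → BStr) (A : ℕ → Bool)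

def nextSym (ρ : List Sym3) (n : ℕ) : Sym3 :=
  if delB ρ <+: σ n then some (A (delB ρ).length) else none

def trueSeg : ℕ → List Sym3
  | 0 => []
  | n + 1 => trueSeg n ++ [nextSym σ A (trueSeg n) n]

def truePath (n : ℕ) : Sym3 := nextSym σ A (trueSeg σ A n) n

variable {σ A}

@[simp] theorem trueSeg_length (n : ℕ) : (trueSeg σ A n).length = n := by
  induction n with
  | zero => rfl
  | succ n ih => simp [trueSeg, ih]

theorem seg_truePath (n : ℕ) : seg (truePath σ A) n = trueSeg σ A n := by
  induction n with
  | zero => rfl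
  | succ n ih => rw [seg_succ, ih, trueSeg, truePath]

theorem trueSeg_prefix_trueSeg {m n : ℕ} (h : m ≤ n) : trueSeg σ A m <+: trueSeg σ A n := by
  simpa only [seg_truePath] using seg_prefix_seg (truePath σ A) h

theorem append_nextSym_mem_approxTree_iff {ρ : List Sym3} :
    ρ ++ [nextSym σ A ρ ρ.length] ∈ approxTree σ ↔ ρ ∈ approxTree σ := by
  rw [append_singleton_mem_approxTree_iff, nextSym]
  split_ifs with h <;> simp [h]

theorem trueSeg_mem_approxTree (n : ℕ) : trueSeg σ A n ∈ approxTree σ := by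
  induction n with
  | zero => exact nil_mem_approxTree
  | succ n ih =>
    have h := (append_nextSym_mem_approxTree_iff (A := A)).mpr ih
    rwa [trueSeg_length] at h

theorem truePath_mem_paths : truePath σ A ∈ paths (approxTree σ) := fun n => by
  rw [seg_truePath]
  exact trueSeg_mem_approxTree n

theorem delB_append_nextSym (ρ : List Sym3) (n : ℕ) :
    delB (ρ ++ [nextSym σ A ρ n]) =
      if delB ρ <+: σ n then delB ρ ++ [A (delB ρ).length] else delB ρ := by
  rw [nextSym]
  split_ifs <;> simp

theorem initSegOf_delB_trueSeg (n : ℕ) : InitSegOf (delB (trueSeg σ A n)) A := by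
  induction n with
  | zero => rfl
  | succ n ih =>
    rw [trueSeg, delB_append_nextSym]
    split_ifs
    · exact initSegOf_append_singleton_iff.mpr ⟨ih, rfl⟩
    · exact ih

theorem eq_trueSeg_of_mem_approxTree {τ : List Sym3} (hτ : τ ∈ approxTree σ)
    (hA : InitSegOf (delB τ) A) : τ = trueSeg σ A τ.length := by
  induction τ using List.reverseRecOn with
  | nil => rfl
  | append_singleton ρ a ih =>
    obtain ⟨hρ, ha⟩ := append_singleton_mem_approxTree_iff.mp hτ
    have hρA : InitSegOf (delB ρ) A := hA.of_prefix (List.prefix_append ρ [a]).delB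
    rw [List.length_append, List.length_singleton, trueSeg, ← ih hρ hρA, nextSym]
    congr
    split_ifs with h
    · obtain ⟨b, rfl⟩ := Option.isSome_iff_exists.mp (ha.mpr h)
      rw [delB_append, delB_singleton_some, initSegOf_append_singleton_iff] at hA
      rw [hA.2]
    · exact Option.not_isSome_iff_eq_none.mp (mt ha.mp h)

theorem length_delB_trueSeg_lt (n : ℕ) : (delB (trueSeg σ A n)).length < n + 1 :=
  Nat.lt_succ_of_le ((delB_length_le _).trans_eq (trueSeg_length n))

theorem trueSeg_congr {B : ℕ → Bool} {n : ℕ} (h : ∀ i < n, A i = B i) :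
    trueSeg σ A n = trueSeg σ B n := by
  induction n with
  | zero => rfl
  | succ n ih =>
    have ih := ih fun i hi => h i (by omega)
    rw [trueSeg, trueSeg, nextSym, nextSym, ← ih, h _ (length_delB_trueSeg_lt n)]

theorem truePath_congr {B : ℕ → Bool} {n : ℕ} (h : ∀ i ≤ n, A i = B i) :
    truePath σ A n = truePath σ B n := by
  have := trueSeg_congr (σ := σ) (n := n + 1) fun i hi => h i (by omega)
  rw [← seg_truePath, ← seg_truePath, seg_succ, seg_succ] at this
  exact List.singleton_inj.mp (List.append_inj' this rfl).2

section Convergence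

variable {σ : ℕ → BStr} {A : ℕ → Bool} (hσ : ∀ n, ∀ᶠ s in atTop, (σ s).take n = seg A n)
include hσ

theorem exists_le_length_delB_trueSeg (j : ℕ) : ∃ n, j ≤ (delB (trueSeg σ A n)).length := by
  induction j with
  | zero => exact ⟨0, le_rfl⟩
  | succ j ih =>
    obtain ⟨n, hn⟩ := ih
    obtain ⟨s, hσs, hns⟩ := ((hσ j).and (eventually_ge_atTop n)).exists
    have hjs : j ≤ (delB (trueSeg σ A s)).length :=
      hn.trans (trueSeg_prefix_trueSeg hns).delB.length_le
    refine ⟨s + 1, ?_⟩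
    rw [trueSeg, delB_append_nextSym]
    split_ifs with hpre
    · simpa using hjs
    · refine lt_of_le_of_ne hjs fun hj => hpre ?_
      rw [initSegOf_delB_trueSeg s, ← hj, ← hσs]
      exact List.take_prefix j (σ s)

theorem eventually_not_prefix {δ : BStr} (hδ : ¬ InitSegOf δ A) : ∀ᶠ s in atTop, ¬ δ <+: σ s := by
  filter_upwards [hσ δ.length] with s hs hpre
  exact hδ ((List.prefix_iff_eq_take.mp hpre).trans hs)

theorem eventually_forall_delB_not_prefix (m : ℕ) : ∀ᶠ s in atTop,
    ∀ ν ∈ approxTree σ, ν.length = m → ν ≠ trueSeg σ A m → ¬ delB ν <+: σ s := by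
  have hν (ν : List Sym3) : ∀ᶠ s in atTop, InitSegOf (delB ν) A ∨ ¬ delB ν <+: σ s := by
    by_cases hνA : InitSegOf (delB ν) A
    · exact .of_forall fun _ => .inl hνA
    · exact (eventually_not_prefix hσ hνA).mono fun _ => .inr
  filter_upwards [(eventually_all_finite (List.finite_length_eq Sym3 m)).2 fun ν _ => hν ν]
    with s hs ν hνT hlen hne
  exact (hs ν hlen).resolve_left fun hνA => hne (hlen ▸ eq_trueSeg_of_mem_approxTree hνT hνA)

theorem exists_forall_eq_none_of_seg_ne_trueSeg (m : ℕ) : ∃ L ≥ m, ∀ X ∈ paths (approxTree σ),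
    seg X m ≠ trueSeg σ A m → ∀ n ≥ L, X n = none := by
  obtain ⟨L, hL⟩ := eventually_atTop.mp
    ((eventually_forall_delB_not_prefix hσ m).and (eventually_ge_atTop m))
  refine ⟨L, (hL L le_rfl).2, fun X hX hne n hn => ?_⟩
  obtain ⟨hdead, hmn⟩ := hL n hn
  by_contra hsome
  have hpre := (isSome_iff_of_mem_paths hX n).mp (Option.ne_none_iff_isSome.mp hsome)
  exact hdead _ (hX m) (seg_length X m) hne ((seg_prefix_seg X hmn).delB.trans hpre)

/-- Off the cylinder of `trueSeg σ A m`, the paths of the tree are isolated by their segments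
of one common length. -/
theorem exists_clopenC_of_disjoint_or_subset {Q : Set (ℕ → Sym3)}
    (hQ : Q ⊆ paths (approxTree σ)) (m : ℕ)
    (hcase : (∀ X ∈ Q, seg X m ≠ trueSeg σ A m) ∨
      ∀ X ∈ paths (approxTree σ), seg X m = trueSeg σ A m → X ∈ Q) :
    ∃ N, ClopenC N ∧ Q = paths (approxTree σ) ∩ N := by
  obtain ⟨L, hLm, hdead⟩ := exists_forall_eq_none_of_seg_ne_trueSeg hσ m
  let S := {X ∈ Q | seg X m ≠ trueSeg σ A m}
  have hiso : ∀ X ∈ S, ∀ Y ∈ paths (approxTree σ), seg Y L = seg X L → Y = X := by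
    rintro X ⟨hXQ, hXm⟩ Y hY hYX
    have hYm : seg Y m ≠ trueSeg σ A m := by rwa [← seg_take Y hLm, hYX, seg_take X hLm]
    funext n
    rcases lt_or_ge n L with hn | hn
    · exact eq_of_seg_eq hYX hn
    · rw [hdead Y hY hYm n hn, hdead X (hQ hXQ) hXm n hn]
  obtain ⟨N, hN, hSN⟩ := exists_clopenC_of_isolated (fun X hX => hQ hX.1) hiso
  rcases hcase with hoff | hon
  · refine ⟨N, hN, ?_⟩
    rw [← hSN]
    exact Set.ext fun X => ⟨fun hX => ⟨hX, hoff X hX⟩, And.left⟩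
  · refine ⟨N ∪ {X | seg X m = trueSeg σ A m},
      hN.union (by simpa using clopenC_cylinder (trueSeg σ A m)), Set.ext fun X => ?_⟩
    constructor
    · intro hX
      refine ⟨hQ hX, ?_⟩
      by_cases hXm : seg X m = trueSeg σ A m
      · exact Or.inr hXm
      · exact Or.inl (hSN ▸ ⟨hX, hXm⟩ : X ∈ paths (approxTree σ) ∩ N).2
    · rintro ⟨hX, hXN | hXm⟩
      · exact (hSN.symm ▸ ⟨hX, hXN⟩ : X ∈ S).1
      · exact hon X hX hXm

end Convergence

section Reductions

variable {σ : ℕ → BStr} {β : Type} [Primcodable β]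

theorem computable_nextSym (hσ : Computable σ) {a : β → ℕ → Bool} (ha : Computable₂ a)
    {ρ : β → List Sym3} (hρ : Computable ρ) {n : β → ℕ} (hn : Computable n) :
    Computable fun b => nextSym σ (a b) (ρ b) (n b) := by
  classical
  have hδ : Computable fun b => delB (ρ b) := primrec_delB.to_comp.comp hρ
  refine (Computable.cond (primrecRel_isPrefix.decide.to_comp.comp hδ (hσ.comp hn))
    (Computable.option_some.comp (ha.comp Computable.id (Computable.list_length.comp hδ)))
    (Computable.const none)).of_eq fun b => ?_
  simp only [nextSym, Bool.cond_decide, id]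

theorem computable₂_trueSeg (hσ : Computable σ) {a : β → ℕ → Bool} (ha : Computable₂ a) :
    Computable₂ fun b n => trueSeg σ (a b) n := by
  have h : Computable fun p : β × ℕ =>
      (Nat.rec [] (fun n ρ => ρ ++ [nextSym σ (a p.1) ρ n]) p.2 : List Sym3) :=
    Computable.nat_rec Computable.snd (Computable.const [])
      (Computable.list_concat.comp (Computable.snd.comp Computable.snd)
        (computable_nextSym hσ (a := fun x i => a x.1.1 i)
          (ha.comp (Computable.fst.comp (Computable.fst.comp Computable.fst)) Computable.snd).to₂
          (Computable.snd.comp Computable.snd) (Computable.fst.comp Computable.snd))).to₂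
  refine h.of_eq fun ⟨b, n⟩ => ?_
  induction n with
  | zero => rfl
  | succ n ih => simp only at ih ⊢; rw [ih]; rfl

/-- `truePath σ A n` only reads `A` below `n + 1` (`truePath_congr`), so the padding by `false`
is never consulted. -/
def truePathFunctional (hσ : Computable σ) : Functional Bool Sym3 where
  φ α n := if n < α.length then some (truePath σ (α.getD · false) n) else none
  comp := by
    classical
    have hα : Computable₂ fun (p : BStr × ℕ) i => p.1.getD i false :=
      ((Primrec.list_getD false).to_comp.comp (Computable.fst.comp Computable.fst)
        Computable.snd).to₂
    refine Computable₂.mk ((Computable.cond (Primrec.nat_lt.decide.to_comp.comp Computable.snd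
      (Computable.list_length.comp Computable.fst))
      (Computable.option_some.comp (computable_nextSym hσ hα
        ((computable₂_trueSeg hσ hα).comp Computable.id Computable.snd) Computable.snd))
      (Computable.const none)).of_eq fun p => ?_)
    simp only [truePath, Bool.cond_decide, id]
  mono {α α' n b} h hb := by
    split_ifs at hb with hn
    rw [if_pos (hn.trans_le h.length_le), ← hb]
    congr 1
    refine truePath_congr fun i hi => ?_
    have hi' : i < α.length := by omega
    simp [List.getD_eq_getElem?_getD, List.prefix_iff_getElem?.mp h i hi',
      List.getElem?_eq_getElem hi']

def delBFunctional : Functional Sym3 Bool where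
  φ τ x := (delB τ)[x]?
  comp := Computable.list_getElem?.comp (primrec_delB.to_comp.comp Computable.fst) Computable.snd
  mono {τ τ' x b} h hb := by
    obtain ⟨t, ht⟩ := h.delB
    change (delB τ)[x]? = some b at hb
    rw [← ht, List.getElem?_append_left (List.getElem?_eq_some_iff.mp hb).1, hb]

variable {A : ℕ → Bool}

theorem turingEquiv_truePath (hσ : RecApprox σ A) : TuringEquiv (truePath σ A) A := by
  refine ⟨⟨truePathFunctional hσ.1, fun n => ⟨n + 1, ?_⟩⟩, ⟨delBFunctional, fun x => ?_⟩⟩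
  · change (if n < (seg A (n + 1)).length then
      some (truePath σ ((seg A (n + 1)).getD · false) n) else none) = some (truePath σ A n)
    rw [seg_length, if_pos n.lt_succ_self, truePath_congr fun i hi => ?_]
    simp [List.getD_eq_getElem?_getD, getElem?_seg A (Nat.lt_succ_of_le hi)]
  · obtain ⟨n, hn⟩ := exists_le_length_delB_trueSeg hσ.eventually_take_eq (x + 1)
    refine ⟨n, ?_⟩
    change (delB (seg (truePath σ A) n))[x]? = some (A x)
    rw [seg_truePath, initSegOf_delB_trueSeg n]
    exact getElem?_seg A (by omega)

end Reductions

section Thin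

variable {σ : ℕ → BStr} {A : ℕ → Bool}

theorem forall_seg_ne_trueSeg_of_not_mem {T' : Set (List Sym3)} {τ : List Sym3}
    (hτ : τ ∈ approxTree σ) (hτT' : τ ∉ T') (hτA : InitSegOf (delB τ) A) :
    ∀ X ∈ paths T', seg X τ.length ≠ trueSeg σ A τ.length := fun _ hX hXτ =>
  hτT' (eq_trueSeg_of_mem_approxTree hτ hτA ▸ hXτ ▸ hX τ.length)

theorem mem_paths_of_seg_eq_trueSeg {T' : Set (List Sym3)} (hT' : IsTree T') {k n : ℕ}
    (hk : ∀ τ ∈ approxTree σ, seg A k <+: delB τ → τ ∈ T')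
    (hn : k ≤ (delB (trueSeg σ A n)).length) :
    ∀ X ∈ paths (approxTree σ), seg X n = trueSeg σ A n → X ∈ paths T' := by
  intro X hX hXn j
  have hAk : seg A k <+: delB (seg X (max j n)) := by
    have h := (seg_prefix_seg X (le_max_right j n)).delB
    rw [hXn, initSegOf_delB_trueSeg n] at h
    exact (seg_prefix_seg A hn).trans h
  exact hT' _ _ (seg_prefix_seg X (le_max_left j n)) (hk _ (hX _) hAk)

theorem thinPi01_paths_approxTree (hσ : RecApprox σ A) (hA : OneGeneric A) :
    ThinPi01 (paths (approxTree σ)) := by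
  obtain ⟨f, hf, hfT⟩ := (recTree_approxTree hσ.1).2
  refine ⟨⟨_, recTree_approxTree hσ.1, rfl⟩, ?_⟩
  rintro Q ⟨T', ⟨hT', f', hf', hfT'⟩, rfl⟩ hQ
  -- genericity is applied to the bit contents of the strings of the tree outside `T'`
  have hV := sigma01_image (p := fun τ => f τ && !f' τ)
    (Primrec.and.to_comp.comp hf (Primrec.not.to_comp.comp hf')) primrec_delB.to_comp
  rcases hA _ hV with ⟨k, τ, hτ, hτA⟩ | ⟨k, hk⟩
  · simp only [Bool.and_eq_true, Bool.not_eq_true', ← hfT, ← Bool.not_eq_true, ← hfT'] at hτ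
    exact exists_clopenC_of_disjoint_or_subset hσ.eventually_take_eq hQ τ.length
      (Or.inl (forall_seg_ne_trueSeg_of_not_mem hτ.1 hτ.2 (hτA ▸ initSegOf_seg A k)))
  · obtain ⟨n, hn⟩ := exists_le_length_delB_trueSeg hσ.eventually_take_eq k
    refine exists_clopenC_of_disjoint_or_subset hσ.eventually_take_eq hQ n
      (Or.inr (mem_paths_of_seg_eq_trueSeg hT' (fun τ hτ hkτ => ?_) hn))
    by_contra hτT'
    exact hk _ hkτ ⟨τ, by simp [(hfT τ).mp hτ, (hfT' τ).not.mp hτT'], rfl⟩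

end Thin

theorem one_generic_below_zero_jump_thin_general (A : ℕ → Bool) (hA : OneGeneric A)
    (hle : TuringLE A K) :
    ∃ T : Set (List Sym3), RecTree T ∧ ThinPi01 (paths T) ∧
      ∃ C ∈ paths T, TuringEquiv C A := by
  obtain ⟨σ, hσ⟩ := exists_recApprox_of_turingLE_K hle
  exact ⟨approxTree σ, recTree_approxTree hσ.1, thinPi01_paths_approxTree hσ hA,
    truePath σ A, truePath_mem_paths, turingEquiv_truePath hσ⟩

/-- every 1-generic degree strictly below 0′ is thin: there is a recursive
tree `T` over the alphabet `{0,1,B}` such that `[T]` is a thin Π⁰₁ class containing a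
path `C ≡_T A`. -/
theorem one_generic_below_zero_jump_thin (A : ℕ → Bool) (hA : OneGeneric A)
    (hle : TuringLE A K) (hlt : ¬ TuringLE K A) :
    ∃ T : Set (List Sym3), RecTree T ∧ ThinPi01 (paths T) ∧
      ∃ C ∈ paths T, TuringEquiv C A :=
  one_generic_below_zero_jump_thin_general A hA hle
end TruePath
end

section
/- Let A be 1-generic with A <_T 0′, with Σ₁-correct approximation (σ_s) of strictly increasing lengths, and let S be the tree of all initial segments of the strings σ_s. Then S is an r.e. tree and A is its unique infinite path. -/
/-! Each initial segment of a path `X` through the tree lies below `σ_s` for infinitely many `s`,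
since the lengths of the `σ_s` grow, and these stages form an r.e. set. Σ₁-correctness puts one
of those `σ_s` below `A`, so `X` and `A` agree on that segment. -/

theorem Primrec.list_isPrefix {α : Type} [Primcodable α] :
    PrimrecRel fun l₁ l₂ : List α => l₁ <+: l₂ :=
  (Primrec.eq.comp₂ Primrec₂.left
      (Primrec.list_take.comp₂ (Primrec.list_length.comp₂ Primrec₂.left) Primrec₂.right)).of_eq
    fun _ _ => List.prefix_iff_eq_take.symm

section PrefixTree

variable {α : Type}

lemma seg_prefix_seg_s8 (X : ℕ → α) {j k : ℕ} (h : j ≤ k) : seg X j <+: seg X k := by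
  have : (seg X k).take j = seg X j := by simp [seg, ← List.map_take, List.take_range, h]
  exact this ▸ List.take_prefix j (seg X k)

lemma apply_eq_of_seg_prefix_seg {X Y : ℕ → α} {n k : ℕ} (h : seg X (n + 1) <+: seg Y k) :
    X n = Y n := by
  simpa [seg] using h.getElem (i := n) (by simp [seg])

lemma isTree_setOf_prefix (σs : ℕ → List α) : IsTree {τ | ∃ s, τ <+: σs s} :=
  fun _ _ hστ ⟨s, hτ⟩ => ⟨s, hστ.trans hτ⟩

lemma computable₂_decide_prefix [Primcodable α] [DecidableEq α] {σs : ℕ → List α}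
    (hσ : Computable σs) : Computable₂ fun (τ : List α) s => decide (τ <+: σs s) :=
  Primrec.list_isPrefix.decide.to_comp.comp Computable.fst (hσ.comp Computable.snd)

lemma infinite_setOf_seg_prefix {σs : ℕ → List α} (hlen : StrictMono fun s => (σs s).length)
    {X : ℕ → α} (hX : X ∈ paths {τ | ∃ s, τ <+: σs s}) (k : ℕ) :
    {s | seg X k <+: σs s}.Infinite := by
  refine Set.infinite_of_forall_exists_gt fun a => ?_
  obtain ⟨s, hs⟩ := hX (max k ((σs a).length + 1))
  refine ⟨s, (seg_prefix_seg_s8 X (le_max_left _ _)).trans hs, hlen.lt_iff_lt.mp ?_⟩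
  have := hs.length_le
  simp only [seg, List.length_map, List.length_range] at this
  omega

end PrefixTree

lemma mem_paths_of_recApprox {σs : ℕ → BStr} {A : ℕ → Bool} (happ : RecApprox σs A) :
    A ∈ paths {τ | ∃ s, τ <+: σs s} := fun k => by
  obtain ⟨s, hs⟩ := happ.2 k
  exact ⟨s, hs s le_rfl ▸ List.take_prefix k (σs s)⟩

lemma SigmaOneCorrect.eq_of_mem_paths {σs : ℕ → BStr} {A : ℕ → Bool}
    (hcor : SigmaOneCorrect σs A) (hσ : Computable σs)
    (hlen : StrictMono fun s => (σs s).length) {X : ℕ → Bool}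
    (hX : X ∈ paths {τ | ∃ s, τ <+: σs s}) : X = A := by
  funext n
  have hre : REset {s | seg X (n + 1) <+: σs s} :=
    ⟨fun s _ => decide (seg X (n + 1) <+: σs s),
      (computable₂_decide_prefix hσ).comp (Computable.const _) Computable.fst,
      fun s => by simp⟩
  obtain ⟨s, hXs, hsA⟩ := hcor _ hre (infinite_setOf_seg_prefix hlen hX (n + 1))
  have hXA : seg X (n + 1) <+: seg A (σs s).length := (hsA : σs s = _) ▸ hXs
  exact apply_eq_of_seg_prefix_seg hXA

theorem approx_tree_unique_path_general (A : ℕ → Bool) (σs : ℕ → BStr)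
    (happ : RecApprox σs A) (hcor : SigmaOneCorrect σs A)
    (hinc : ∀ s, (σs s).length < (σs (s + 1)).length) :
    (∃ f : BStr → ℕ → Bool, Computable₂ f ∧
        ∀ τ : BStr, (∃ s, τ <+: σs s) ↔ ∃ n, f τ n = true) ∧
    IsTree {τ : BStr | ∃ s, τ <+: σs s} ∧
    A ∈ paths {τ : BStr | ∃ s, τ <+: σs s} ∧
    paths {τ : BStr | ∃ s, τ <+: σs s} = {A} := by
  have hlen : StrictMono fun s => (σs s).length := strictMono_nat_of_lt_succ hinc
  have hA := mem_paths_of_recApprox happ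
  refine ⟨⟨_, computable₂_decide_prefix happ.1, fun τ => by simp⟩, isTree_setOf_prefix σs, hA,
    Set.eq_singleton_iff_unique_mem.2 ⟨hA, fun X hX => hcor.eq_of_mem_paths happ.1 hlen hX⟩⟩

/-- for a Σ₁-correct approximation `(σ_s)` of a 1-generic `A <_T 0′` with
strictly increasing lengths, the set `S` of all initial segments of the `σ_s` is an
r.e. tree whose unique infinite path is `A`. -/
theorem approx_tree_unique_path (A : ℕ → Bool) (σs : ℕ → BStr) (hA : OneGeneric A)
    (hle : TuringLE A K) (hlt : ¬ TuringLE K A)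
    (happ : RecApprox σs A) (hcor : SigmaOneCorrect σs A)
    (hinc : ∀ s, (σs s).length < (σs (s + 1)).length) :
    (∃ f : BStr → ℕ → Bool, Computable₂ f ∧
        ∀ τ : BStr, (∃ s, τ <+: σs s) ↔ ∃ n, f τ n = true) ∧
    IsTree {τ : BStr | ∃ s, τ <+: σs s} ∧
    A ∈ paths {τ : BStr | ∃ s, τ <+: σs s} ∧
    paths {τ : BStr | ∃ s, τ <+: σs s} = {A} :=
  approx_tree_unique_path_general A σs happ hcor hinc
end
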